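/- Consider the two-item all-pay auction with B_1 ≠ B_2, let s be the player with the larger budget and w the other, and set L_j = min{B_1, B_2, v_{1j}, v_{2j}}. Assume v_{s1} = L_1, v_{s2} = L_2, and additionally L_1/v_{w1} + L_2/v_{w2} ≥ 1. Define T_1 = L_1 − v_{w1} + (L_2/v_{w2})·v_{w1} and T_2 = L_2 − v_{w2} + (L_1/v_{w1})·v_{w2}. Then the following profile is a Nash equilibrium: player s's strategy is the mixture that, with probability L_1/v_{w1} + L_2/v_{w2} − 1, is uniform on the segment joining (0, T_2) to (T_1, 0); with probability (L_1 − T_1)/v_{w1}, is uniform on the segment {(t, 0) : t ∈ [T_1, L_1]}; and with probability (L_2 − T_2)/v_{w2}, is uniform on the segment {(0, t) : t ∈ [T_2, L_2]}. Player w's strategy is the uniform distribution on the segment joining (0, L_2) to (L_1, 0). -/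

import Mathlib

/-! The weak player's strategy makes his bid on item `j` uniform on `[0, L_j]`, so a strong bid
`x ≥ 0` on item `j` wins with probability `min x L_j / L_j`. Since the strong player values item
`j` at exactly `L_j`, he earns `min x L_j - x ≤ 0` there, with equality on the box
`[0, L₁] × [0, L₂]` that carries his mixture.

Writing `a_j` for the weak player's values, the strong mixture gives the strong bid on item `j` an
atom of mass `1 - L_j / a_j` at `0` and density `1 / a_j` on `[0, L_j]`. A weak bid
`x ∈ (0, L_j]` therefore earns exactly `a_j - L_j` on item `j`, and no bid earns more. Each player
is indifferent on the support of his strategy, so neither gains by deviating.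

All these win probabilities come from `∫ y in a..b, 𝟙{y < x} = min b x - min a x`, the right
derivative of `min · x` being `𝟙{· < x}`.
-/

open MeasureTheory Set

noncomputable section

/-- `L_j = min {B₁, B₂, v_{1j}, v_{2j}}` for item `j` of the two-item auction. -/
def Lval2 (B : Fin 2 → ℝ) (v : Fin 2 → Fin 2 → ℝ) (j : Fin 2) : ℝ :=
  min (min (B 0) (B 1)) (min (v 0 j) (v 1 j))

/-- Probability that player `i` wins item `j` when bidding `xi` on it while the
opponent bids `xo`: the strictly higher bid wins; on a tie at `L_j` the player with
the strictly larger `min {Bᵢ, v_{ij}}` wins, and all other ties are fair coins. -/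
def winProb2 (B : Fin 2 → ℝ) (v : Fin 2 → Fin 2 → ℝ) (i j : Fin 2) (xi xo : ℝ) : ℝ :=
  if xo < xi then 1
  else if xi < xo then 0
  else if xi = Lval2 B v j ∧ min (B (1 - i)) (v (1 - i) j) < min (B i) (v i j) then 1
  else if xi = Lval2 B v j ∧ min (B i) (v i j) < min (B (1 - i)) (v (1 - i) j) then 0
  else 1 / 2

/-- Expected total utility of player `i` from the pure bid vectors `p` (own) and
`q` (opponent): the sum over the two items of the item payoffs. -/
def payoff2 (B : Fin 2 → ℝ) (v : Fin 2 → Fin 2 → ℝ) (i : Fin 2) (p q : ℝ × ℝ) : ℝ :=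
  (winProb2 B v i 0 p.1 q.1 * v i 0 - p.1) +
    (winProb2 B v i 1 p.2 q.2 * v i 1 - p.2)

/-- Feasible bid vectors of a player with budget `Bi`. -/
def Feas (Bi : ℝ) : Set (ℝ × ℝ) := {p | 0 ≤ p.1 ∧ 0 ≤ p.2 ∧ p.1 + p.2 ≤ Bi}

/-- A mixed strategy with budget `Bi`: a probability measure on the feasible set. -/
def IsStrategy2 (Bi : ℝ) (μ : Measure (ℝ × ℝ)) : Prop :=
  IsProbabilityMeasure μ ∧ μ (Feas Bi) = 1

/-- Expected utility of player `i` when he plays `μ` and the opponent plays `ν`. -/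
def expUtil2 (B : Fin 2 → ℝ) (v : Fin 2 → Fin 2 → ℝ) (i : Fin 2)
    (μ ν : Measure (ℝ × ℝ)) : ℝ :=
  ∫ p, (∫ q, payoff2 B v i p q ∂ν) ∂μ

/-- `(F 0, F 1)` is a (mixed) Nash equilibrium of the two-item all-pay auction. -/
def IsNash2 (B : Fin 2 → ℝ) (v : Fin 2 → Fin 2 → ℝ) (F : Fin 2 → Measure (ℝ × ℝ)) :
    Prop :=
  (∀ i, IsStrategy2 (B i) (F i)) ∧
  ∀ i, ∀ μ, IsStrategy2 (B i) μ →
    expUtil2 B v i μ (F (1 - i)) ≤ expUtil2 B v i (F i) (F (1 - i))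

/-- The uniform distribution on the segment from `a` to `b` in the plane: the
pushforward of the uniform distribution on `[0, 1]` under the affine
parameterization of the segment. -/
def unifSeg (a b : ℝ × ℝ) : Measure (ℝ × ℝ) :=
  Measure.map (fun t : ℝ => ((1 - t) * a.1 + t * b.1, (1 - t) * a.2 + t * b.2))
    (volume.restrict (Icc (0 : ℝ) 1))

theorem hasDerivWithinAt_min_Ioi (x y : ℝ) :
    HasDerivWithinAt (fun z => min z x) ((Iio x).indicator 1 y) (Ioi y) y := by
  rcases lt_or_ge y x with h | h
  · rw [indicator_of_mem (mem_Iio.2 h)]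
    refine ((hasDerivAt_id y).congr_of_eventuallyEq ?_).hasDerivWithinAt
    filter_upwards [Iio_mem_nhds h] with z hz using min_eq_left hz.le
  · rw [indicator_of_notMem (notMem_Iio.2 h)]
    exact (hasDerivWithinAt_const y _ x).congr
      (fun z hz => min_eq_right (h.trans hz.le)) (min_eq_right h)

theorem antitone_indicator_Iio (x : ℝ) : Antitone ((Iio x).indicator (1 : ℝ → ℝ)) := by
  intro y z hyz
  by_cases hz : z < x
  · simp [indicator_of_mem (mem_Iio.2 hz), indicator_of_mem (mem_Iio.2 (hyz.trans_lt hz))]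
  · simp [indicator_of_notMem (mt mem_Iio.1 hz), indicator_nonneg]

theorem intervalIntegral_indicator_Iio (x a b : ℝ) :
    ∫ y in a..b, (Iio x).indicator 1 y = min b x - min a x :=
  intervalIntegral.integral_eq_sub_of_hasDeriv_right
    (continuous_id.min continuous_const).continuousOn
    (fun y _ => hasDerivWithinAt_min_Ioi x y) (antitone_indicator_Iio x).intervalIntegrable

theorem sub_mul_setIntegral_Icc_comp {f : ℝ → ℝ} {x : ℝ}
    (hf : f =ᵐ[volume] (Iio x).indicator 1) (a b : ℝ) :
    (b - a) * ∫ t in Icc (0 : ℝ) 1, f ((1 - t) * a + t * b) = min b x - min a x := by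
  have hsub := intervalIntegral.smul_integral_comp_add_mul (f := f) (a := 0) (b := 1) (b - a) a
  simp only [mul_zero, add_zero, mul_one, add_sub_cancel, smul_eq_mul] at hsub
  rw [integral_Icc_eq_integral_Ioc, ← intervalIntegral.integral_of_le zero_le_one,
    ← intervalIntegral_indicator_Iio]
  calc (b - a) * ∫ t in (0 : ℝ)..1, f ((1 - t) * a + t * b)
      = (b - a) * ∫ t in (0 : ℝ)..1, f (a + (b - a) * t) := by ring_nf
    _ = ∫ y in a..b, f y := hsub
    _ = _ := intervalIntegral.integral_congr_ae (by filter_upwards [hf] with y hy _ using hy)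

section WinProb

variable (B : Fin 2 → ℝ) (v : Fin 2 → Fin 2 → ℝ) (i j : Fin 2) (x : ℝ)

theorem winProb2_of_lt {xo : ℝ} (h : xo < x) : winProb2 B v i j x xo = 1 := if_pos h

theorem winProb2_nonneg (xo : ℝ) : 0 ≤ winProb2 B v i j x xo := by
  unfold winProb2; split_ifs <;> norm_num

theorem winProb2_le_one (xo : ℝ) : winProb2 B v i j x xo ≤ 1 := by
  unfold winProb2; split_ifs <;> norm_num

theorem measurable_winProb2 : Measurable (winProb2 B v i j x) :=
  Measurable.ite measurableSet_Iio measurable_const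
    (Measurable.ite measurableSet_Ioi measurable_const measurable_const)

theorem winProb2_ae_eq_indicator : winProb2 B v i j x =ᵐ[volume] (Iio x).indicator 1 := by
  filter_upwards [Measure.ae_ne volume x] with xo hxo
  rcases hxo.lt_or_gt with h | h
  · simp [winProb2_of_lt B v i j x h, indicator_of_mem (mem_Iio.2 h)]
  · simp [winProb2, h, h.not_gt]

theorem integrable_winProb2_comp {μ : Measure (ℝ × ℝ)} [IsFiniteMeasure μ] {g : ℝ × ℝ → ℝ}
    (hg : Measurable g) : Integrable (fun q => winProb2 B v i j x (g q)) μ :=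
  .of_bound ((measurable_winProb2 B v i j x).comp hg).aestronglyMeasurable 1
    (ae_of_all _ fun q => by
      rw [Real.norm_eq_abs, abs_le]
      exact ⟨by linarith [winProb2_nonneg B v i j x (g q)], winProb2_le_one B v i j x (g q)⟩)

end WinProb

section UnifSeg

variable (a b : ℝ × ℝ)

theorem measurable_unifSeg_param :
    Measurable fun t : ℝ => ((1 - t) * a.1 + t * b.1, (1 - t) * a.2 + t * b.2) := by
  fun_prop

instance : IsProbabilityMeasure (unifSeg a b) :=
  haveI : IsProbabilityMeasure (volume.restrict (Icc (0 : ℝ) 1)) := ⟨by simp⟩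
  Measure.isProbabilityMeasure_map (measurable_unifSeg_param a b).aemeasurable

theorem integral_unifSeg {g : ℝ × ℝ → ℝ} (hg : Measurable g) :
    ∫ q, g q ∂unifSeg a b =
      ∫ t in Icc (0 : ℝ) 1, g ((1 - t) * a.1 + t * b.1, (1 - t) * a.2 + t * b.2) :=
  integral_map (measurable_unifSeg_param a b).aemeasurable hg.aestronglyMeasurable

theorem ae_unifSeg {P : ℝ × ℝ → Prop} (hP : MeasurableSet {q | P q})
    (h : ∀ t ∈ Ioo (0 : ℝ) 1, P ((1 - t) * a.1 + t * b.1, (1 - t) * a.2 + t * b.2)) :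
    ∀ᵐ q ∂unifSeg a b, P q := by
  rw [unifSeg, ae_map_iff (measurable_unifSeg_param a b).aemeasurable hP,
    ← restrict_Ioo_eq_restrict_Icc, ae_restrict_iff' measurableSet_Ioo]
  exact ae_of_all _ h

theorem ae_mem_unifSeg {K : Set (ℝ × ℝ)} (hK : Convex ℝ K) (hKm : MeasurableSet K)
    (ha : a ∈ K) (hb : b ∈ K) : ∀ᵐ q ∂unifSeg a b, q ∈ K :=
  ae_unifSeg a b hKm fun t ht => by
    convert hK ha hb (sub_nonneg.2 ht.2.le) ht.1.le (sub_add_cancel 1 t) using 1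
    ext <;> simp

theorem sub_mul_integral_fst_unifSeg {f : ℝ → ℝ} {x : ℝ} (hfm : Measurable f)
    (hf : f =ᵐ[volume] (Iio x).indicator 1) :
    (b.1 - a.1) * ∫ q, f q.1 ∂unifSeg a b = min b.1 x - min a.1 x := by
  rw [integral_unifSeg a b (g := fun q => f q.1) (hfm.comp measurable_fst)]
  exact sub_mul_setIntegral_Icc_comp hf a.1 b.1

theorem sub_mul_integral_snd_unifSeg {f : ℝ → ℝ} {x : ℝ} (hfm : Measurable f)
    (hf : f =ᵐ[volume] (Iio x).indicator 1) :
    (b.2 - a.2) * ∫ q, f q.2 ∂unifSeg a b = min b.2 x - min a.2 x := by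
  rw [integral_unifSeg a b (g := fun q => f q.2) (hfm.comp measurable_snd)]
  exact sub_mul_setIntegral_Icc_comp hf a.2 b.2

end UnifSeg

theorem integral_fst_unifSeg_of_eq {f : ℝ → ℝ} (hfm : Measurable f) {a b : ℝ × ℝ}
    (h : a.1 = b.1) : ∫ q, f q.1 ∂unifSeg a b = f a.1 := by
  rw [integral_unifSeg a b (g := fun q => f q.1) (hfm.comp measurable_fst)]
  simp [h, ← add_mul]

theorem integral_snd_unifSeg_of_eq {f : ℝ → ℝ} (hfm : Measurable f) {a b : ℝ × ℝ}
    (h : a.2 = b.2) : ∫ q, f q.2 ∂unifSeg a b = f a.2 := by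
  rw [integral_unifSeg a b (g := fun q => f q.2) (hfm.comp measurable_snd)]
  simp [h, ← add_mul]

theorem integral_payoff2 (B : Fin 2 → ℝ) (v : Fin 2 → Fin 2 → ℝ) (i : Fin 2) (p : ℝ × ℝ)
    (ν : Measure (ℝ × ℝ)) [IsProbabilityMeasure ν] :
    ∫ q, payoff2 B v i p q ∂ν =
      ((∫ q, winProb2 B v i 0 p.1 q.1 ∂ν) * v i 0 - p.1) +
        ((∫ q, winProb2 B v i 1 p.2 q.2 ∂ν) * v i 1 - p.2) := by
  have h1 := integrable_winProb2_comp B v i 0 p.1 (μ := ν) measurable_fst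
  have h2 := integrable_winProb2_comp B v i 1 p.2 (μ := ν) measurable_snd
  simp only [payoff2]
  rw [integral_add (by fun_prop) (by fun_prop), integral_sub (by fun_prop) (by fun_prop),
    integral_sub (by fun_prop) (by fun_prop), integral_mul_const, integral_mul_const]
  simp

/-- `a₁, a₂` are the weak player's values; in the paper's notation `T_j = α a_j`,
`L₁ = (α + β) a₁` and `L₂ = (α + γ) a₂`. -/
def strongStrategy (α β γ a₁ a₂ : ℝ) : Measure (ℝ × ℝ) :=
  ENNReal.ofReal α • unifSeg (0, α * a₂) (α * a₁, 0) +
    ENNReal.ofReal β • unifSeg (α * a₁, 0) ((α + β) * a₁, 0) +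
    ENNReal.ofReal γ • unifSeg (0, α * a₂) (0, (α + γ) * a₂)

section StrongStrategy

variable {α β γ : ℝ}

theorem isProbabilityMeasure_strongStrategy (hα : 0 ≤ α) (hβ : 0 ≤ β) (hγ : 0 ≤ γ)
    (hsum : α + β + γ = 1) (a₁ a₂ : ℝ) : IsProbabilityMeasure (strongStrategy α β γ a₁ a₂) := by
  constructor
  simp only [strongStrategy, Measure.add_apply, Measure.smul_apply, measure_univ, smul_eq_mul,
    mul_one]
  rw [← ENNReal.ofReal_add hα hβ, ← ENNReal.ofReal_add (add_nonneg hα hβ) hγ, hsum,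
    ENNReal.ofReal_one]

theorem integral_strongStrategy (hα : 0 ≤ α) (hβ : 0 ≤ β) (hγ : 0 ≤ γ) (a₁ a₂ : ℝ)
    {g : ℝ × ℝ → ℝ} (hg : ∀ a b, Integrable g (unifSeg a b)) :
    ∫ q, g q ∂strongStrategy α β γ a₁ a₂ =
      α * ∫ q, g q ∂unifSeg (0, α * a₂) (α * a₁, 0) +
        β * ∫ q, g q ∂unifSeg (α * a₁, 0) ((α + β) * a₁, 0) +
        γ * ∫ q, g q ∂unifSeg (0, α * a₂) (0, (α + γ) * a₂) := by
  have hsmul : ∀ {c : ℝ} (a b), Integrable g (ENNReal.ofReal c • unifSeg a b) :=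
    fun a b => (hg a b).smul_measure ENNReal.ofReal_ne_top
  rw [strongStrategy, integral_add_measure (hsmul _ _ |>.add_measure (hsmul _ _)) (hsmul _ _),
    integral_add_measure (hsmul _ _) (hsmul _ _), integral_smul_measure, integral_smul_measure,
    integral_smul_measure, ENNReal.toReal_ofReal hα, ENNReal.toReal_ofReal hβ,
    ENNReal.toReal_ofReal hγ]
  simp only [smul_eq_mul]

theorem ae_mem_strongStrategy (a₁ a₂ : ℝ) {K : Set (ℝ × ℝ)} (hK : Convex ℝ K)
    (hKm : MeasurableSet K) (h₁ : (0, α * a₂) ∈ K) (h₂ : (α * a₁, 0) ∈ K)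
    (h₃ : ((α + β) * a₁, 0) ∈ K) (h₄ : (0, (α + γ) * a₂) ∈ K) :
    ∀ᵐ q ∂strongStrategy α β γ a₁ a₂, q ∈ K := by
  simp only [strongStrategy, ae_add_measure_iff]
  exact ⟨⟨Measure.ae_smul_measure (ae_mem_unifSeg _ _ hK hKm h₁ h₂) _,
    Measure.ae_smul_measure (ae_mem_unifSeg _ _ hK hKm h₂ h₃) _⟩,
    Measure.ae_smul_measure (ae_mem_unifSeg _ _ hK hKm h₁ h₄) _⟩

end StrongStrategy

abbrev weakStrategy (L₁ L₂ : ℝ) : Measure (ℝ × ℝ) := unifSeg (0, L₂) (L₁, 0)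

section Payoffs

variable (B : Fin 2 → ℝ) (v : Fin 2 → Fin 2 → ℝ) (i : Fin 2) {p : ℝ × ℝ}

theorem integral_payoff2_weakStrategy {L₁ L₂ : ℝ} (hv₁ : v i 0 = L₁) (hv₂ : v i 1 = L₂)
    (hp₁ : 0 ≤ p.1) (hp₂ : 0 ≤ p.2) :
    ∫ q, payoff2 B v i p q ∂weakStrategy L₁ L₂ = (min L₁ p.1 - p.1) + (min L₂ p.2 - p.2) := by
  have h₁ := sub_mul_integral_fst_unifSeg (0, L₂) (L₁, 0) (measurable_winProb2 B v i 0 p.1)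
    (winProb2_ae_eq_indicator B v i 0 p.1)
  have h₂ := sub_mul_integral_snd_unifSeg (0, L₂) (L₁, 0) (measurable_winProb2 B v i 1 p.2)
    (winProb2_ae_eq_indicator B v i 1 p.2)
  simp only [min_eq_left hp₁, min_eq_left hp₂] at h₁ h₂
  rw [weakStrategy, integral_payoff2, hv₁, hv₂]
  linear_combination h₁ - h₂

theorem integral_payoff2_strongStrategy {α β γ : ℝ} (hα : 0 ≤ α) (hβ : 0 ≤ β) (hγ : 0 ≤ γ)
    (hsum : α + β + γ = 1) (hp₁ : 0 ≤ p.1) (hp₂ : 0 ≤ p.2) :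
    ∫ q, payoff2 B v i p q ∂strongStrategy α β γ (v i 0) (v i 1) =
      (min ((α + β) * v i 0) p.1 + γ * v i 0 * winProb2 B v i 0 p.1 0 - p.1) +
        (min ((α + γ) * v i 1) p.2 + β * v i 1 * winProb2 B v i 1 p.2 0 - p.2) := by
  have := isProbabilityMeasure_strongStrategy hα hβ hγ hsum (v i 0) (v i 1)
  have hm₁ := measurable_winProb2 B v i 0 p.1
  have hm₂ := measurable_winProb2 B v i 1 p.2
  have hf₁ := winProb2_ae_eq_indicator B v i 0 p.1
  have hf₂ := winProb2_ae_eq_indicator B v i 1 p.2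
  have h₁ := sub_mul_integral_fst_unifSeg (0, α * v i 1) (α * v i 0, 0) hm₁ hf₁
  have h₂ := sub_mul_integral_fst_unifSeg (α * v i 0, 0) ((α + β) * v i 0, 0) hm₁ hf₁
  have h₃ := integral_fst_unifSeg_of_eq hm₁ (a := (0, α * v i 1)) (b := (0, (α + γ) * v i 1)) rfl
  have h₄ := sub_mul_integral_snd_unifSeg (0, α * v i 1) (α * v i 0, 0) hm₂ hf₂
  have h₅ := integral_snd_unifSeg_of_eq hm₂ (a := (α * v i 0, 0)) (b := ((α + β) * v i 0, 0)) rfl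
  have h₆ := sub_mul_integral_snd_unifSeg (0, α * v i 1) (0, (α + γ) * v i 1) hm₂ hf₂
  simp only [min_eq_left hp₁, min_eq_left hp₂] at h₁ h₂ h₃ h₄ h₅ h₆
  rw [integral_payoff2, integral_strongStrategy hα hβ hγ _ _ fun _ _ =>
      integrable_winProb2_comp B v i 0 p.1 measurable_fst,
    integral_strongStrategy hα hβ hγ _ _ fun _ _ =>
      integrable_winProb2_comp B v i 1 p.2 measurable_snd]
  linear_combination h₁ + h₂ + γ * v i 0 * h₃ - h₄ + β * v i 1 * h₅ + h₆

end Payoffs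

theorem measurableSet_feas (Bi : ℝ) : MeasurableSet (Feas Bi) :=
  (measurableSet_le measurable_const measurable_fst).inter
    ((measurableSet_le measurable_const measurable_snd).inter
      (measurableSet_le (measurable_fst.add measurable_snd) measurable_const))

theorem convex_feas (Bi : ℝ) : Convex ℝ (Feas Bi) := by
  rintro p ⟨hp₁, hp₂, hp⟩ q ⟨hq₁, hq₂, hq⟩ a b ha hb hab
  refine ⟨?_, ?_, ?_⟩ <;> simp only [Prod.fst_add, Prod.snd_add, Prod.smul_fst, Prod.smul_snd,
    smul_eq_mul]
  · positivity
  · positivity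
  · nlinarith

theorem isStrategy2_iff_ae_mem {Bi : ℝ} {μ : Measure (ℝ × ℝ)} [IsProbabilityMeasure μ] :
    IsStrategy2 Bi μ ↔ ∀ᵐ p ∂μ, p ∈ Feas Bi := by
  rw [ae_mem_iff_measure_eq (measurableSet_feas Bi).nullMeasurableSet, measure_univ]
  exact ⟨fun h => h.2, fun h => ⟨inferInstance, h⟩⟩

theorem isNash2_of_indifference (B : Fin 2 → ℝ) (v : Fin 2 → Fin 2 → ℝ)
    (F : Fin 2 → Measure (ℝ × ℝ)) (V : Fin 2 → ℝ) (hF : ∀ i, IsStrategy2 (B i) (F i))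
    (hV : ∀ i, 0 ≤ V i)
    (hle : ∀ i, ∀ p ∈ Feas (B i), ∫ q, payoff2 B v i p q ∂F (1 - i) ≤ V i)
    (heq : ∀ i, ∀ᵐ p ∂F i, ∫ q, payoff2 B v i p q ∂F (1 - i) = V i) : IsNash2 B v F := by
  refine ⟨hF, fun i μ hμ => ?_⟩
  have := hμ.1
  have := (hF i).1
  have hμV : expUtil2 B v i μ (F (1 - i)) ≤ V i := by
    by_cases hint : Integrable (fun p => ∫ q, payoff2 B v i p q ∂F (1 - i)) μ
    · refine (integral_mono_ae hint (integrable_const (V i)) ?_).trans_eq (by simp)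
      filter_upwards [isStrategy2_iff_ae_mem.1 hμ] with p hp using hle i p hp
    -- a non-integrable payoff has Bochner integral `0`, which is why `V i ≥ 0` is assumed
    · exact (integral_undef hint).trans_le (hV i)
  have hFV : expUtil2 B v i (F i) (F (1 - i)) = V i := by
    rw [expUtil2, integral_congr_ae (heq i)]
    simp
  exact hFV ▸ hμV

theorem Lval2_le_budget (B : Fin 2 → ℝ) (v : Fin 2 → Fin 2 → ℝ) (j k : Fin 2) :
    Lval2 B v j ≤ B k := by
  fin_cases k <;> simp [Lval2]

theorem Lval2_le_value (B : Fin 2 → ℝ) (v : Fin 2 → Fin 2 → ℝ) (j k : Fin 2) :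
    Lval2 B v j ≤ v k j := by
  fin_cases k <;> simp [Lval2]

theorem forall_fin_two_of_sub {P : Fin 2 → Prop} (s : Fin 2) (hs : P s) (hw : P (1 - s)) :
    ∀ k, P k := by
  have hk : ∀ k s : Fin 2, k = s ∨ k = 1 - s := by decide
  intro k
  obtain rfl | rfl := hk k s
  exacts [hs, hw]

theorem isStrategy2_strongStrategy {Bi α β γ a₁ a₂ : ℝ} (hα : 0 ≤ α) (hβ : 0 ≤ β) (hγ : 0 ≤ γ)
    (hsum : α + β + γ = 1) (ha₁ : 0 ≤ a₁) (ha₂ : 0 ≤ a₂) (hB₁ : (α + β) * a₁ ≤ Bi)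
    (hB₂ : (α + γ) * a₂ ≤ Bi) : IsStrategy2 Bi (strongStrategy α β γ a₁ a₂) := by
  have := isProbabilityMeasure_strongStrategy hα hβ hγ hsum a₁ a₂
  refine isStrategy2_iff_ae_mem.2 (ae_mem_strongStrategy _ _ (convex_feas _)
    (measurableSet_feas _) ?_ ?_ ?_ ?_) <;> refine ⟨?_, ?_, ?_⟩ <;> dsimp only <;> nlinarith

theorem ae_mem_Icc_strongStrategy {α β γ a₁ a₂ : ℝ} (hα : 0 ≤ α) (hβ : 0 ≤ β) (hγ : 0 ≤ γ)
    (ha₁ : 0 ≤ a₁) (ha₂ : 0 ≤ a₂) :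
    ∀ᵐ q ∂strongStrategy α β γ a₁ a₂, q ∈ Icc 0 ((α + β) * a₁, (α + γ) * a₂) := by
  refine ae_mem_strongStrategy _ _ (convex_Icc _ _) measurableSet_Icc ?_ ?_ ?_ ?_ <;>
    refine ⟨⟨?_, ?_⟩, ⟨?_, ?_⟩⟩ <;> simp only [Prod.fst_zero, Prod.snd_zero] <;> nlinarith

theorem isStrategy2_weakStrategy {Bi L₁ L₂ : ℝ} (hL₁ : 0 ≤ L₁) (hL₂ : 0 ≤ L₂) (hB₁ : L₁ ≤ Bi)
    (hB₂ : L₂ ≤ Bi) : IsStrategy2 Bi (weakStrategy L₁ L₂) :=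
  isStrategy2_iff_ae_mem.2 (ae_mem_unifSeg _ _ (convex_feas _) (measurableSet_feas _)
    ⟨le_rfl, hL₂, by simpa⟩ ⟨hL₁, le_rfl, by simpa⟩)

theorem ae_pos_le_weakStrategy {L₁ L₂ : ℝ} (hL₁ : 0 < L₁) (hL₂ : 0 < L₂) :
    ∀ᵐ q ∂weakStrategy L₁ L₂, 0 < q.1 ∧ q.1 ≤ L₁ ∧ 0 < q.2 ∧ q.2 ≤ L₂ :=
  ae_unifSeg _ _ (by measurability) fun t ⟨ht₀, ht₁⟩ => by
    refine ⟨?_, ?_, ?_, ?_⟩ <;> dsimp only <;> nlinarith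

theorem integral_payoff2_strongStrategy_le (B : Fin 2 → ℝ) (v : Fin 2 → Fin 2 → ℝ) (i : Fin 2)
    {α β γ : ℝ} (hα : 0 ≤ α) (hβ : 0 ≤ β) (hγ : 0 ≤ γ) (hsum : α + β + γ = 1)
    (hv : ∀ j, 0 ≤ v i j) {p : ℝ × ℝ} (hp₁ : 0 ≤ p.1) (hp₂ : 0 ≤ p.2) :
    ∫ q, payoff2 B v i p q ∂strongStrategy α β γ (v i 0) (v i 1) ≤
      γ * v i 0 + β * v i 1 := by
  rw [integral_payoff2_strongStrategy B v i hα hβ hγ hsum hp₁ hp₂]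
  have h₁ := mul_le_mul_of_nonneg_left (winProb2_le_one B v i 0 p.1 0) (mul_nonneg hγ (hv 0))
  have h₂ := mul_le_mul_of_nonneg_left (winProb2_le_one B v i 1 p.2 0) (mul_nonneg hβ (hv 1))
  linarith [min_le_right ((α + β) * v i 0) p.1, min_le_right ((α + γ) * v i 1) p.2]

theorem isNash2_strongStrategy_weakStrategy (B : Fin 2 → ℝ) (v : Fin 2 → Fin 2 → ℝ)
    (s : Fin 2) {α β γ L₁ L₂ : ℝ} (hα : 0 ≤ α) (hβ : 0 ≤ β) (hγ : 0 ≤ γ)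
    (hsum : α + β + γ = 1) (hw : ∀ j, 0 ≤ v (1 - s) j)
    (hL₁ : (α + β) * v (1 - s) 0 = L₁) (hL₂ : (α + γ) * v (1 - s) 1 = L₂)
    (hvs₁ : v s 0 = L₁) (hvs₂ : v s 1 = L₂) (hL₁pos : 0 < L₁) (hL₂pos : 0 < L₂)
    (hB₁ : ∀ k, L₁ ≤ B k) (hB₂ : ∀ k, L₂ ≤ B k) :
    IsNash2 B v (fun k => if k = s then strongStrategy α β γ (v (1 - s) 0) (v (1 - s) 1)
      else weakStrategy L₁ L₂) := by
  have hws : ∀ t : Fin 2, 1 - t ≠ t := by decide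
  refine isNash2_of_indifference B v _ (fun k => if k = s then 0
      else γ * v (1 - s) 0 + β * v (1 - s) 1)
    (forall_fin_two_of_sub s ?_ ?_) (forall_fin_two_of_sub s ?_ ?_)
    (forall_fin_two_of_sub s ?_ ?_) (forall_fin_two_of_sub s ?_ ?_) <;>
    simp only [hws, sub_sub_cancel, if_true, if_false]
  · exact isStrategy2_strongStrategy hα hβ hγ hsum (hw 0) (hw 1) (hL₁ ▸ hB₁ s) (hL₂ ▸ hB₂ s)
  · exact isStrategy2_weakStrategy hL₁pos.le hL₂pos.le (hB₁ _) (hB₂ _)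
  · exact le_rfl
  · exact add_nonneg (mul_nonneg hγ (hw 0)) (mul_nonneg hβ (hw 1))
  · rintro p ⟨hp₁, hp₂, -⟩
    rw [integral_payoff2_weakStrategy B v s hvs₁ hvs₂ hp₁ hp₂]
    linarith [min_le_right L₁ p.1, min_le_right L₂ p.2]
  · rintro p ⟨hp₁, hp₂, -⟩
    exact integral_payoff2_strongStrategy_le B v _ hα hβ hγ hsum hw hp₁ hp₂
  · filter_upwards [ae_mem_Icc_strongStrategy hα hβ hγ (hw 0) (hw 1)]
      with p ⟨⟨hp₁, hp₂⟩, ⟨hpL₁, hpL₂⟩⟩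
    rw [hL₁, hL₂] at *
    rw [integral_payoff2_weakStrategy B v s hvs₁ hvs₂ hp₁ hp₂, min_eq_right hpL₁,
      min_eq_right hpL₂]
    ring
  · filter_upwards [ae_pos_le_weakStrategy hL₁pos hL₂pos] with p ⟨hp₁, hpL₁, hp₂, hpL₂⟩
    rw [integral_payoff2_strongStrategy B v _ hα hβ hγ hsum hp₁.le hp₂.le, hL₁, hL₂,
      min_eq_right hpL₁, min_eq_right hpL₂, winProb2_of_lt _ _ _ _ _ hp₁,
      winProb2_of_lt _ _ _ _ _ hp₂]
    ring

theorem strongStrategy_eq {L₁ L₂ a₁ a₂ T₁ T₂ : ℝ} (ha₁ : a₁ ≠ 0) (ha₂ : a₂ ≠ 0)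
    (hT₁ : T₁ = L₁ - a₁ + L₂ / a₂ * a₁) (hT₂ : T₂ = L₂ - a₂ + L₁ / a₁ * a₂) :
    strongStrategy (L₁ / a₁ + L₂ / a₂ - 1) (1 - L₂ / a₂) (1 - L₁ / a₁) a₁ a₂ =
      ENNReal.ofReal (L₁ / a₁ + L₂ / a₂ - 1) • unifSeg (0, T₂) (T₁, 0) +
        ENNReal.ofReal ((L₁ - T₁) / a₁) • unifSeg (T₁, 0) (L₁, 0) +
        ENNReal.ofReal ((L₂ - T₂) / a₂) • unifSeg (0, T₂) (0, L₂) := by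
  have e₁ : (L₁ / a₁ + L₂ / a₂ - 1) * a₁ = T₁ := by rw [hT₁]; field_simp; ring
  have e₂ : (L₁ / a₁ + L₂ / a₂ - 1) * a₂ = T₂ := by rw [hT₂]; field_simp; ring
  have e₃ : (L₁ - T₁) / a₁ = 1 - L₂ / a₂ := by rw [hT₁]; field_simp; ring
  have e₄ : (L₂ - T₂) / a₂ = 1 - L₁ / a₁ := by rw [hT₂]; field_simp; ring
  have e₅ : (L₁ / a₁ + L₂ / a₂ - 1 + (1 - L₂ / a₂)) * a₁ = L₁ := by field_simp; ring
  have e₆ : (L₁ / a₁ + L₂ / a₂ - 1 + (1 - L₁ / a₁)) * a₂ = L₂ := by field_simp; ring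
  rw [strongStrategy, e₁, e₂, e₃, e₄, e₅, e₆]

theorem nash_two_items_case2_general (B : Fin 2 → ℝ) (v : Fin 2 → Fin 2 → ℝ)
    (hv : ∀ i j, 0 < v i j)
    (s : Fin 2)
    (L1 L2 : ℝ) (hL1 : L1 = Lval2 B v 0) (hL2 : L2 = Lval2 B v 1)
    (hvs1 : v s 0 = L1) (hvs2 : v s 1 = L2)
    (hw : L1 / v (1 - s) 0 + L2 / v (1 - s) 1 ≥ 1)
    (T1 T2 : ℝ)
    (hT1 : T1 = L1 - v (1 - s) 0 + L2 / v (1 - s) 1 * v (1 - s) 0)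
    (hT2 : T2 = L2 - v (1 - s) 1 + L1 / v (1 - s) 0 * v (1 - s) 1) :
    IsNash2 B v (fun k =>
      if k = s then
        ENNReal.ofReal (L1 / v (1 - s) 0 + L2 / v (1 - s) 1 - 1) •
            unifSeg (0, T2) (T1, 0) +
          ENNReal.ofReal ((L1 - T1) / v (1 - s) 0) • unifSeg (T1, 0) (L1, 0) +
          ENNReal.ofReal ((L2 - T2) / v (1 - s) 1) • unifSeg (0, T2) (0, L2)
      else unifSeg (0, L2) (L1, 0)) := by
  have ha₁ := hv (1 - s) 0
  have ha₂ := hv (1 - s) 1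
  have hβ : 0 ≤ 1 - L2 / v (1 - s) 1 :=
    sub_nonneg.2 ((div_le_one ha₂).2 (hL2 ▸ Lval2_le_value B v 1 (1 - s)))
  have hγ : 0 ≤ 1 - L1 / v (1 - s) 0 :=
    sub_nonneg.2 ((div_le_one ha₁).2 (hL1 ▸ Lval2_le_value B v 0 (1 - s)))
  convert isNash2_strongStrategy_weakStrategy B v s (sub_nonneg.2 hw) hβ hγ (by ring)
    (fun j => (hv _ j).le) (by field_simp; ring) (by field_simp; ring) hvs1 hvs2
    (hvs1 ▸ hv s 0) (hvs2 ▸ hv s 1) (fun k => hL1 ▸ Lval2_le_budget B v 0 k)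
    (fun k => hL2 ▸ Lval2_le_budget B v 1 k) using 4
  exact (strongStrategy_eq ha₁.ne' ha₂.ne' hT1 hT2).symm

/-- Case 2 of the two-item auction with asymmetric budgets (`s` has the larger
budget, `w = 1 - s`): if `v_{s1} = L₁` and `v_{s2} = L₂` (together with the mass
condition `L₁/v_{w1} + L₂/v_{w2} ≥ 1`), then the described pair of mixtures of
uniform distributions on segments is a Nash equilibrium. -/
theorem nash_two_items_case2 (B : Fin 2 → ℝ) (v : Fin 2 → Fin 2 → ℝ)
    (hB : ∀ i, 0 ≤ B i) (hv : ∀ i j, 0 < v i j)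
    (s : Fin 2) (hs : B (1 - s) < B s)
    (L1 L2 : ℝ) (hL1 : L1 = Lval2 B v 0) (hL2 : L2 = Lval2 B v 1)
    (hvs1 : v s 0 = L1) (hvs2 : v s 1 = L2)
    (hw : L1 / v (1 - s) 0 + L2 / v (1 - s) 1 ≥ 1)
    (T1 T2 : ℝ)
    (hT1 : T1 = L1 - v (1 - s) 0 + L2 / v (1 - s) 1 * v (1 - s) 0)
    (hT2 : T2 = L2 - v (1 - s) 1 + L1 / v (1 - s) 0 * v (1 - s) 1) :
    IsNash2 B v (fun k =>
      if k = s then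
        ENNReal.ofReal (L1 / v (1 - s) 0 + L2 / v (1 - s) 1 - 1) •
            unifSeg (0, T2) (T1, 0) +
          ENNReal.ofReal ((L1 - T1) / v (1 - s) 0) • unifSeg (T1, 0) (L1, 0) +
          ENNReal.ofReal ((L2 - T2) / v (1 - s) 1) • unifSeg (0, T2) (0, L2)
      else unifSeg (0, L2) (L1, 0)) :=
  nash_two_items_case2_general B v hv s L1 L2 hL1 hL2 hvs1 hvs2 hw T1 T2 hT1 hT2
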